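/- arXiv:2506.19375 — 4 statements merged into one kernel-verified Lean document; each statement's English description precedes it below -/
import Mathlib

section
/- (Surrogate tightness) With the notation of the finite TAR identity, for any V : S → ℝ≥0 with V(ψ) ≤ V*(ψ) for all ψ ∈ Ψ, one has L_TAR(V) = λσ²/2 + L(V). In particular L_TAR(V) − λσ²/2 ≥ L(V) for all V ≥ 0, with equality whenever V ≤ V* on Ψ. -/
/-- surrogate tightness — if `V ≤ V*` on `Ψ` then
`L_TAR(V) = λσ²/2 + L(V)`; in general `L_TAR(W) − λσ²/2 ≥ L(W)` for `W ≥ 0`. -/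
theorem tar_surrogate_tightness {S : Type*} [Fintype S] (Ψ : Finset S)
    (p0 p : S → ℝ)
    (hp0 : ∀ s, 0 ≤ p0 s) (hp0sum : ∑ s, p0 s = 1)
    (hp : ∀ s, 0 ≤ p s) (hpsum : ∑ s, p s = 1)
    (hpsupp : ∀ s, s ∉ Ψ → p s = 0)
    (J Var : S → ℝ) (hJ01 : ∀ ψ ∈ Ψ, J ψ ∈ Set.Icc (0:ℝ) 1)
    (Vstar : S → ℝ) (hVsJ : ∀ ψ ∈ Ψ, Vstar ψ = J ψ)
    (lam : ℝ) (hlam : 0 ≤ lam)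
    (EY : S → ℝ → ℝ)
    (hEY : ∀ ψ c, EY ψ c = Var ψ + (J ψ - c) ^ 2)
    (LTAR L : (S → ℝ) → ℝ)
    (hLTAR : ∀ W, LTAR W
        = (∑ s, p0 s * W s) + lam / 2 * ∑ ψ ∈ Ψ, p ψ * EY ψ (W ψ))
    (hL : ∀ W, L W
        = (∑ s, p0 s * W s) + lam / 2 * ∑ ψ ∈ Ψ, p ψ * max (J ψ - W ψ) 0 ^ 2)
    (σ2 : ℝ) (hσ2 : σ2 = ∑ ψ ∈ Ψ, p ψ * Var ψ)
    (V : S → ℝ) (hV : ∀ s, 0 ≤ V s) (hVle : ∀ ψ ∈ Ψ, V ψ ≤ Vstar ψ) :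
    LTAR V = lam * σ2 / 2 + L V
      ∧ ∀ W : S → ℝ, (∀ s, 0 ≤ W s) → L W ≤ LTAR W - lam * σ2 / 2 := by
  have key : ∀ W : S → ℝ, (∀ ψ ∈ Ψ, max (J ψ - W ψ) 0 ^ 2 ≤ (J ψ - W ψ) ^ 2) := by
    intro W ψ _
    rcases le_or_gt (J ψ - W ψ) 0 with h | h
    · rw [max_eq_right h]; simpa using sq_nonneg (J ψ - W ψ)
    · rw [max_eq_left h.le]
  have expand : ∀ W : S → ℝ, LTAR W
      = lam * σ2 / 2 + ((∑ s, p0 s * W s)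
        + lam / 2 * ∑ ψ ∈ Ψ, p ψ * (J ψ - W ψ) ^ 2) := by
    intro W
    rw [hLTAR, hσ2]
    have : ∑ ψ ∈ Ψ, p ψ * EY ψ (W ψ)
        = (∑ ψ ∈ Ψ, p ψ * Var ψ) + ∑ ψ ∈ Ψ, p ψ * (J ψ - W ψ) ^ 2 := by
      rw [← Finset.sum_add_distrib]
      refine Finset.sum_congr rfl fun ψ _ => ?_
      rw [hEY]; ring
    rw [this]; ring
  constructor
  · rw [expand, hL]
    have : ∑ ψ ∈ Ψ, p ψ * max (J ψ - V ψ) 0 ^ 2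
        = ∑ ψ ∈ Ψ, p ψ * (J ψ - V ψ) ^ 2 := by
      refine Finset.sum_congr rfl fun ψ hψ => ?_
      have : 0 ≤ J ψ - V ψ := by
        have := hVle ψ hψ; rw [hVsJ ψ hψ] at this; linarith
      rw [max_eq_left this]
    rw [this]
  · intro W hW
    rw [expand, hL]
    have : ∑ ψ ∈ Ψ, p ψ * max (J ψ - W ψ) 0 ^ 2
        ≤ ∑ ψ ∈ Ψ, p ψ * (J ψ - W ψ) ^ 2 := by
      refine Finset.sum_le_sum fun ψ hψ => ?_
      exact mul_le_mul_of_nonneg_left (key W ψ hψ) (hp ψ)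
    have hl2 : 0 ≤ lam / 2 := by positivity
    nlinarith [mul_le_mul_of_nonneg_left this hl2]
end

section
/- (Argmin characterization lemma) If V' minimizes L over {V : S → ℝ≥0} and p₀(s) > 0 for all s, then V'(s) ≤ V*(s) for all s ∈ Ψ, where V*(ψ) = J(ψ) on Ψ. -/
/-- any minimizer of `L` over nonnegative functions satisfies
`V' ≤ V*` on `Ψ`, when `p₀` is strictly positive. -/
theorem minimizer_le_vstar {S : Type*} [Fintype S] (Ψ : Finset S)
    (p0 p : S → ℝ)
    (hp0 : ∀ s, 0 < p0 s) (hp0sum : ∑ s, p0 s = 1)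
    (hp : ∀ s, 0 ≤ p s) (hpsum : ∑ s, p s = 1)
    (hpsupp : ∀ s, s ∉ Ψ → p s = 0)
    (J : S → ℝ) (hJ01 : ∀ ψ ∈ Ψ, J ψ ∈ Set.Icc (0:ℝ) 1)
    (Vstar : S → ℝ) (hVstar : ∀ s, 0 ≤ Vstar s)
    (hVsJ : ∀ ψ ∈ Ψ, Vstar ψ = J ψ)
    (lam : ℝ) (hlam : 0 ≤ lam)
    (L : (S → ℝ) → ℝ)
    (hL : ∀ W, L W
        = (∑ s, p0 s * W s) + lam / 2 * ∑ ψ ∈ Ψ, p ψ * max (J ψ - W ψ) 0 ^ 2)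
    (V' : S → ℝ) (hV' : ∀ s, 0 ≤ V' s)
    (hmin : ∀ W : S → ℝ, (∀ s, 0 ≤ W s) → L V' ≤ L W) :
    ∀ ψ ∈ Ψ, V' ψ ≤ Vstar ψ := by
  intro ψ hψ
  by_contra hcon
  push_neg at hcon
  set W : S → ℝ := fun s => min (V' s) (Vstar s) with hWdef
  have hWnn : ∀ s, 0 ≤ W s := fun s => le_min (hV' s) (hVstar s)
  have hpen : ∀ x ∈ Ψ, max (J x - W x) 0 = max (J x - V' x) 0 := by
    intro x hx
    rcases le_or_gt (V' x) (J x) with hle | hlt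
    · have : W x = V' x := min_eq_left (by rw [hVsJ x hx]; exact hle)
      rw [this]
    · have hWx : W x = J x := by
        have : Vstar x ≤ V' x := by rw [hVsJ x hx]; exact hlt.le
        simp [hWdef, min_eq_right this, hVsJ x hx]
      rw [hWx]
      rw [max_eq_right (by linarith), max_eq_right (by linarith)]
  have hpensum : ∑ x ∈ Ψ, p x * max (J x - W x) 0 ^ 2
      = ∑ x ∈ Ψ, p x * max (J x - V' x) 0 ^ 2 :=
    Finset.sum_congr rfl fun x hx => by rw [hpen x hx]
  have hlin : ∑ s, p0 s * W s < ∑ s, p0 s * V' s := by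
    refine Finset.sum_lt_sum (fun s _ => mul_le_mul_of_nonneg_left (min_le_left _ _) (hp0 s).le)
      ⟨ψ, Finset.mem_univ ψ, ?_⟩
    have : W ψ = Vstar ψ := min_eq_right hcon.le
    rw [this]
    exact mul_lt_mul_of_pos_left hcon (hp0 ψ)
  have h := hmin W hWnn
  rw [hL V', hL W, hpensum] at h
  linarith
end

section
/- (Θ* ⊆ Θ*_TAR) In the finite setting, if θ' minimizes L(V_θ) over {θ : V_θ ≥ 0}, the parametrization is expressive (some θ* achieves the unconstrained-over-nonnegative-functions minimum of L), and p₀ > 0 everywhere, then θ' also minimizes L_TAR(V_θ) over {θ : V_θ ≥ 0}. -/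
/-- `Θ* ⊆ Θ*_TAR` — under expressivity and `p₀ > 0`, any
feasible minimizer `θ'` of `L(V_θ)` also minimizes `L_TAR(V_θ)`. -/
theorem L_min_subset_LTAR_min {S : Type*} [Fintype S] (Ψ : Finset S)
    (p0 p : S → ℝ)
    (hp0 : ∀ s, 0 < p0 s) (hp0sum : ∑ s, p0 s = 1)
    (hp : ∀ s, 0 ≤ p s) (hpsum : ∑ s, p s = 1)
    (hpsupp : ∀ s, s ∉ Ψ → p s = 0)
    (J : S → ℝ) (hJ01 : ∀ ψ ∈ Ψ, J ψ ∈ Set.Icc (0:ℝ) 1)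
    (Vstar : S → ℝ) (hVstar : ∀ s, 0 ≤ Vstar s)
    (hVsJ : ∀ ψ ∈ Ψ, Vstar ψ = J ψ)
    (lam σ2 : ℝ) (hlam : 0 ≤ lam) (hσ2 : 0 ≤ σ2)
    (L LTAR : (S → ℝ) → ℝ)
    (hL : ∀ W, L W
        = (∑ s, p0 s * W s) + lam / 2 * ∑ ψ ∈ Ψ, p ψ * max (J ψ - W ψ) 0 ^ 2)
    (hLTAR : ∀ W, LTAR W
        = lam * σ2 / 2 + L W
          + lam / 2 * ∑ ψ ∈ Ψ, p ψ * max (W ψ - Vstar ψ) 0 ^ 2)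
    {Θ : Type*} (Vθ : Θ → S → ℝ)
    (θstar : Θ) (hθstarnn : ∀ s, 0 ≤ Vθ θstar s)
    (hθstaropt : ∀ W : S → ℝ, (∀ s, 0 ≤ W s) → L (Vθ θstar) ≤ L W)
    (θ' : Θ) (hθ'nn : ∀ s, 0 ≤ Vθ θ' s)
    (hθ'min : ∀ θ : Θ, (∀ s, 0 ≤ Vθ θ s) → L (Vθ θ') ≤ L (Vθ θ)) :
    ∀ θ : Θ, (∀ s, 0 ≤ Vθ θ s) → LTAR (Vθ θ') ≤ LTAR (Vθ θ) := by
  classical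
  -- Step 1: V_θ' ≤ J on Ψ, by the truncation argument.
  have hle : ∀ ψ ∈ Ψ, Vθ θ' ψ ≤ J ψ := by
    by_contra hcon
    push_neg at hcon
    obtain ⟨ψ0, hψ0, hgt⟩ := hcon
    set W : S → ℝ := fun s => if s ∈ Ψ then min (Vθ θ' s) (J s) else Vθ θ' s with hW
    have hWnn : ∀ s, 0 ≤ W s := by
      intro s
      simp only [hW]
      split_ifs with h
      · exact le_min (hθ'nn s) (hJ01 s h).1
      · exact hθ'nn s
    have hfirst : ∑ s, p0 s * W s < ∑ s, p0 s * Vθ θ' s := by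
      apply Finset.sum_lt_sum
      · intro s _
        apply mul_le_mul_of_nonneg_left _ (hp0 s).le
        simp only [hW]
        split_ifs with h
        · exact min_le_left _ _
        · exact le_rfl
      · refine ⟨ψ0, Finset.mem_univ _, ?_⟩
        apply mul_lt_mul_of_pos_left _ (hp0 ψ0)
        simp only [hW, if_pos hψ0]
        exact lt_of_le_of_lt (min_le_right _ _) hgt
    have hsecond : ∀ ψ ∈ Ψ, max (J ψ - W ψ) 0 = max (J ψ - Vθ θ' ψ) 0 := by
      intro ψ hψ
      simp only [hW, if_pos hψ]
      rcases le_total (Vθ θ' ψ) (J ψ) with h | h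
      · rw [min_eq_left h]
      · rw [min_eq_right h, sub_self, max_self,
          max_eq_right (by linarith : J ψ - Vθ θ' ψ ≤ (0:ℝ))]
    have hLW : L W < L (Vθ θ') := by
      have heq : ∑ ψ ∈ Ψ, p ψ * max (J ψ - W ψ) 0 ^ 2
          = ∑ ψ ∈ Ψ, p ψ * max (J ψ - Vθ θ' ψ) 0 ^ 2 :=
        Finset.sum_congr rfl fun ψ hψ => by rw [hsecond ψ hψ]
      rw [hL W, hL (Vθ θ'), heq]
      linarith [hfirst]
    have h1 : L (Vθ θ') ≤ L (Vθ θstar) := hθ'min θstar hθstarnn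
    have h2 : L (Vθ θstar) ≤ L W := hθstaropt W hWnn
    linarith
  -- Step 2: the TAR penalty vanishes at θ'.
  have hpen : ∑ ψ ∈ Ψ, p ψ * max (Vθ θ' ψ - Vstar ψ) 0 ^ 2 = 0 := by
    apply Finset.sum_eq_zero
    intro ψ hψ
    have : max (Vθ θ' ψ - Vstar ψ) 0 = 0 := by
      rw [hVsJ ψ hψ]
      exact max_eq_right (by linarith [hle ψ hψ])
    rw [this]
    ring
  intro θ hθnn
  have hpennn : 0 ≤ ∑ ψ ∈ Ψ, p ψ * max (Vθ θ ψ - Vstar ψ) 0 ^ 2 :=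
    Finset.sum_nonneg fun ψ _ => mul_nonneg (hp ψ) (sq_nonneg _)
  have hlam2 : 0 ≤ lam / 2 := by linarith
  have := hθ'min θ hθnn
  rw [hLTAR (Vθ θ'), hLTAR (Vθ θ), hpen]
  nlinarith [mul_nonneg hlam2 hpennn]
end

section
/- (Θ*_TAR ⊆ Θ*) In the finite setting, assume there exists θ* with V_{θ*} minimizing L over all nonnegative functions S → ℝ≥0 (so V_{θ*} ≤ V* on Ψ). Then every minimizer θ'' of L_TAR over {θ : V_θ ≥ 0} also minimizes L over {θ : V_θ ≥ 0}. -/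
/-- `Θ*_TAR ⊆ Θ*` — under expressivity and `p₀ > 0`, any
feasible minimizer `θ''` of `L_TAR(V_θ)` also minimizes `L(V_θ)`. -/
theorem LTAR_min_subset_L_min {S : Type*} [Fintype S] (Ψ : Finset S)
    (p0 p : S → ℝ)
    (hp0 : ∀ s, 0 < p0 s) (hp0sum : ∑ s, p0 s = 1)
    (hp : ∀ s, 0 ≤ p s) (hpsum : ∑ s, p s = 1)
    (hpsupp : ∀ s, s ∉ Ψ → p s = 0)
    (J : S → ℝ) (hJ01 : ∀ ψ ∈ Ψ, J ψ ∈ Set.Icc (0:ℝ) 1)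
    (Vstar : S → ℝ) (hVstar : ∀ s, 0 ≤ Vstar s)
    (hVsJ : ∀ ψ ∈ Ψ, Vstar ψ = J ψ)
    (lam σ2 : ℝ) (hlam : 0 ≤ lam) (hσ2 : 0 ≤ σ2)
    (L LTAR : (S → ℝ) → ℝ)
    (hL : ∀ W, L W
        = (∑ s, p0 s * W s) + lam / 2 * ∑ ψ ∈ Ψ, p ψ * max (J ψ - W ψ) 0 ^ 2)
    (hLTAR : ∀ W, LTAR W
        = lam * σ2 / 2 + L W
          + lam / 2 * ∑ ψ ∈ Ψ, p ψ * max (W ψ - Vstar ψ) 0 ^ 2)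
    {Θ : Type*} (Vθ : Θ → S → ℝ)
    (θstar : Θ) (hθstarnn : ∀ s, 0 ≤ Vθ θstar s)
    (hθstaropt : ∀ W : S → ℝ, (∀ s, 0 ≤ W s) → L (Vθ θstar) ≤ L W)
    (θ'' : Θ) (hθ''nn : ∀ s, 0 ≤ Vθ θ'' s)
    (hθ''min : ∀ θ : Θ, (∀ s, 0 ≤ Vθ θ s) → LTAR (Vθ θ'') ≤ LTAR (Vθ θ)) :
    ∀ θ : Θ, (∀ s, 0 ≤ Vθ θ s) → L (Vθ θ'') ≤ L (Vθ θ) := by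
  classical
  -- Step 1: V_{θ*} ≤ J on Ψ
  have hle : ∀ ψ ∈ Ψ, Vθ θstar ψ ≤ J ψ := by
    by_contra hcon
    push_neg at hcon
    obtain ⟨ψ0, hψ0, hgt⟩ := hcon
    set W : S → ℝ := fun s => if s ∈ Ψ then min (Vθ θstar s) (J s) else Vθ θstar s with hW
    have hWnn : ∀ s, 0 ≤ W s := by
      intro s
      simp only [hW]
      split
      · exact le_min (hθstarnn s) (hJ01 s (by assumption)).1
      · exact hθstarnn s
    have hWle : ∀ s, W s ≤ Vθ θstar s := by
      intro s; simp only [hW]; split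
      · exact min_le_left _ _
      · exact le_rfl
    have hpen : ∀ ψ ∈ Ψ, max (J ψ - W ψ) 0 = max (J ψ - Vθ θstar ψ) 0 := by
      intro ψ hψ
      simp only [hW, if_pos hψ]
      rcases le_total (Vθ θstar ψ) (J ψ) with h | h
      · rw [min_eq_left h]
      · rw [min_eq_right h]
        simp [max_eq_right (by linarith : J ψ - Vθ θstar ψ ≤ 0)]
    have hsum1 : ∑ s, p0 s * W s < ∑ s, p0 s * Vθ θstar s := by
      apply Finset.sum_lt_sum
      · intro s _
        exact mul_le_mul_of_nonneg_left (hWle s) (hp0 s).le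
      · refine ⟨ψ0, Finset.mem_univ _, ?_⟩
        apply mul_lt_mul_of_pos_left _ (hp0 ψ0)
        simp only [hW, if_pos hψ0]
        rw [min_eq_right hgt.le]
        exact hgt
    have hsum2 : ∑ ψ ∈ Ψ, p ψ * max (J ψ - W ψ) 0 ^ 2
        = ∑ ψ ∈ Ψ, p ψ * max (J ψ - Vθ θstar ψ) 0 ^ 2 := by
      apply Finset.sum_congr rfl
      intro ψ hψ
      rw [hpen ψ hψ]
    have : L W < L (Vθ θstar) := by
      rw [hL, hL, hsum2]
      linarith
    exact absurd (hθstaropt W hWnn) (not_le.mpr this)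
  -- Step 2: LTAR(V_{θ*}) = lam σ2 /2 + L(V_{θ*})
  have hLTARstar : LTAR (Vθ θstar) = lam * σ2 / 2 + L (Vθ θstar) := by
    rw [hLTAR]
    have : ∑ ψ ∈ Ψ, p ψ * max (Vθ θstar ψ - Vstar ψ) 0 ^ 2 = 0 := by
      apply Finset.sum_eq_zero
      intro ψ hψ
      rw [hVsJ ψ hψ, max_eq_right (by linarith [hle ψ hψ] : Vθ θstar ψ - J ψ ≤ 0)]
      ring
    rw [this]; ring
  -- Step 3: chain
  intro θ hθ
  have h1 : L (Vθ θ'') ≤ LTAR (Vθ θ'') - lam * σ2 / 2 := by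
    rw [hLTAR]
    have hnn : 0 ≤ lam / 2 * ∑ ψ ∈ Ψ, p ψ * max (Vθ θ'' ψ - Vstar ψ) 0 ^ 2 := by
      apply mul_nonneg (by linarith)
      apply Finset.sum_nonneg
      intro ψ _
      exact mul_nonneg (hp ψ) (sq_nonneg _)
    linarith
  have h2 : LTAR (Vθ θ'') ≤ LTAR (Vθ θstar) := hθ''min θstar hθstarnn
  have h3 : L (Vθ θstar) ≤ L (Vθ θ) := hθstaropt (Vθ θ) hθ
  linarith
end
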